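/- Let u be a trace in M(Σ,I) and a∈Σ. Then u is a-short (i.e., the rule a²→1 is never applied in reducing u to its S_C-normal form; equivalently the letter a occurs equally often in u and in its Coxeter normal form) if and only if u has no factor of the form a v a with α̂(v) ⊆ I(a), where α̂(v) is the alphabet of the Coxeter normal form of v and I(a) = {b | (a,b)∈I}. -/

import Mathlib

/-!
Everything runs through an explicit normal form. `consNF c m` cancels `c` against a copy of `c`
that commutes to the front of `m`, or else prepends `c`; `nf w` folds this over `w`. Since
`consNF` respects trace equivalence, commutes for independent letters and is an involution on
reduced words, `nf w` is a reduced descendant of `w` that is invariant under rewriting. So every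
irreducible descendant of `u` is trace equivalent to `nf u`, and `u` is `a`-short iff `nf u` has
as many letters `a` as `u`.

A factor `a v a` with `α̂(v) ⊆ I(a)` rewrites to `v̂ a a` and loses two letters `a`. Conversely,
along a reduction of `u` losing an `a`, the step that deletes `a a` exhibits the factor `a a`,
and by Levi's lemma such a factor survives backwards through every step deleting some `c c`: it
lies before the deleted `c c`, after it, or straddles it, and then `c c` joins `v` without
changing `v̂`.
-/

/-- One commutation step: exchanging two adjacent independent letters. -/
def swapStep {S : Type*} (I : S → S → Prop) (u v : List S) : Prop :=
  ∃ (p s : List S) (a b : S), I a b ∧ u = p ++ a :: b :: s ∧ v = p ++ b :: a :: s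

/-- Trace equivalence: the equivalence relation on words generated by commutation steps. -/
def traceEq {S : Type*} (I : S → S → Prop) : List S → List S → Prop :=
  Relation.EqvGen (swapStep I)

/-- The setoid of trace equivalence. -/
def traceSetoid {S : Type*} (I : S → S → Prop) : Setoid (List S) :=
  Relation.EqvGen.setoid (swapStep I)

/-- The trace monoid `M(Σ, I)`: words over `Σ` up to commutation of independent letters. -/
def Trace {S : Type*} (I : S → S → Prop) : Type _ := Quotient (traceSetoid I)

/-- The trace represented by a word. -/
def mkT {S : Type*} (I : S → S → Prop) (w : List S) : Trace I :=
  Quotient.mk (traceSetoid I) w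

/-- The length of a trace (well defined since commutation preserves length). -/
def lenT {S : Type*} (I : S → S → Prop) : Trace I → ℕ :=
  Quotient.lift List.length (by
    intro u v h
    induction h with
    | rel x y hxy =>
        obtain ⟨p, s, a, b, -, hx, hy⟩ := hxy
        subst hx; subst hy; simp
    | refl x => rfl
    | symm x y _ ih => omega
    | trans x y z _ _ ih1 ih2 => omega)

/-- One step of the trace rewriting system `S_C = {a² → 1 | a ∈ Σ}`. -/
def RwC {S : Type*} (I : S → S → Prop) (x y : Trace I) : Prop :=
  ∃ (a : S) (u v : List S), x = mkT I (u ++ a :: a :: v) ∧ y = mkT I (u ++ v)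

/-- A trace is `S_C`-irreducible iff no rule applies (no factor `a²`). -/
def IrrC {S : Type*} (I : S → S → Prop) (x : Trace I) : Prop :=
  ∀ y, ¬ RwC I x y

open Relation

namespace traceEq

variable {S : Type*} {I : S → S → Prop} {u v w x y : List S}

@[refl] theorem refl (w : List S) : traceEq I w w := EqvGen.refl w

@[symm] theorem symm (h : traceEq I u v) : traceEq I v u := EqvGen.symm _ _ h

@[trans] theorem trans (h₁ : traceEq I u v) (h₂ : traceEq I v w) : traceEq I u w :=
  EqvGen.trans _ _ _ h₁ h₂

theorem swap {a b : S} (hab : I a b) (p s : List S) :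
    traceEq I (p ++ a :: b :: s) (p ++ b :: a :: s) :=
  EqvGen.rel _ _ ⟨p, s, a, b, hab, rfl, rfl⟩

theorem perm (h : traceEq I u v) : u.Perm v := by
  induction h with
  | rel _ _ hs =>
      obtain ⟨p, s, a, b, -, rfl, rfl⟩ := hs
      exact .append_left p (.swap b a s)
  | refl => rfl
  | symm _ _ _ ih => exact ih.symm
  | trans _ _ _ _ _ ih₁ ih₂ => exact ih₁.trans ih₂

theorem mem_iff (h : traceEq I u v) {b : S} : b ∈ u ↔ b ∈ v := h.perm.mem_iff

theorem append_left (p : List S) (h : traceEq I u v) : traceEq I (p ++ u) (p ++ v) := by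
  induction h with
  | rel _ _ hs =>
      obtain ⟨q, s, a, b, hab, rfl, rfl⟩ := hs
      simpa using swap hab (p ++ q) s
  | refl => rfl
  | symm _ _ _ ih => exact ih.symm
  | trans _ _ _ _ _ ih₁ ih₂ => exact ih₁.trans ih₂

theorem append_right (s : List S) (h : traceEq I u v) : traceEq I (u ++ s) (v ++ s) := by
  induction h with
  | rel _ _ hs =>
      obtain ⟨q, r, a, b, hab, rfl, rfl⟩ := hs
      simpa using swap hab q (r ++ s)
  | refl => rfl
  | symm _ _ _ ih => exact ih.symm
  | trans _ _ _ _ _ ih₁ ih₂ => exact ih₁.trans ih₂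

theorem append (h₁ : traceEq I u v) (h₂ : traceEq I x y) : traceEq I (u ++ x) (v ++ y) :=
  (h₁.append_right x).trans (h₂.append_left v)

theorem cons (c : S) (h : traceEq I u v) : traceEq I (c :: u) (c :: v) := h.append_left [c]

end traceEq

section Basic

variable {S : Type*} {I : S → S → Prop}

theorem mkT_eq_iff {u v : List S} : mkT I u = mkT I v ↔ traceEq I u v := Quotient.eq

theorem traceEq_cons_append_of_forall {c : S} {w₁ : List S} (h : ∀ b ∈ w₁, I c b)
    (w₂ : List S) : traceEq I (c :: (w₁ ++ w₂)) (w₁ ++ c :: w₂) := by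
  induction w₁ with
  | nil => rfl
  | cons b w₁ ih =>
      exact (traceEq.swap (h b (by simp)) [] _).trans
        ((ih fun x hx => h x (by simp [hx])).cons b)

theorem traceEq_append_comm {xs ys : List S} (h : ∀ x ∈ xs, ∀ y ∈ ys, I x y) :
    traceEq I (xs ++ ys) (ys ++ xs) := by
  induction xs with
  | nil => simp [traceEq.refl]
  | cons x xs ih =>
      exact ((ih fun z hz => h z (by simp [hz])).cons x).trans
        (traceEq_cons_append_of_forall (h x (by simp)) xs)

theorem traceEq.reflTransGen (hsym : ∀ a b, I a b → I b a) {u v : List S}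
    (h : traceEq I u v) : ReflTransGen (swapStep I) u v := by
  have : Std.Symm (swapStep I) := ⟨by
    rintro _ _ ⟨p, s, a, b, hab, rfl, rfl⟩
    exact ⟨p, s, b, a, hsym a b hab, rfl, rfl⟩⟩
  induction h with
  | rel _ _ hs => exact .single hs
  | refl => exact .refl
  | symm _ _ _ ih => exact Std.Symm.symm _ _ ih
  | trans _ _ _ _ _ ih₁ ih₂ => exact ih₁.trans ih₂

end Basic

theorem List.append_cons_eq_append_cons_cons {S : Type*} {w₁ w₂ p s : List S} {c x y : S}
    (h : w₁ ++ c :: w₂ = p ++ x :: y :: s) :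
    (∃ q, p = w₁ ++ c :: q ∧ w₂ = q ++ x :: y :: s) ∨ (w₁ = p ∧ c = x ∧ w₂ = y :: s) ∨
      (w₁ = p ++ [x] ∧ c = y ∧ w₂ = s) ∨ (∃ q, w₁ = p ++ x :: y :: q ∧ s = q ++ c :: w₂) := by
  rcases List.append_eq_append_iff.mp h with ⟨q, rfl, hq⟩ | ⟨q, rfl, hq⟩
  · rcases q with _ | ⟨d, q⟩
    · simp_all
    · simp only [List.cons_append, List.cons.injEq] at hq
      exact Or.inl ⟨q, by simp [hq.1], hq.2⟩
  · rcases q with _ | ⟨d, _ | ⟨e, q⟩⟩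
    · simp_all
    · simp_all
    · simp only [List.cons_append, List.cons.injEq] at hq
      obtain ⟨rfl, rfl, rfl⟩ := hq
      simp

-- An occurrence of `c` is *visible* if every letter before it commutes with `c`.
section Visible

variable {S : Type*} {I : S → S → Prop}

theorem swapStep.exists_visible {w₁ w₂ w : List S} {c : S} (hw : swapStep I (w₁ ++ c :: w₂) w)
    (h₁ : ∀ b ∈ w₁, I c b) :
    ∃ w₁' w₂', w = w₁' ++ c :: w₂' ∧ (∀ b ∈ w₁', I c b) ∧ traceEq I (w₁ ++ w₂) (w₁' ++ w₂') := by
  obtain ⟨p, s, x, y, hxy, hpos, rfl⟩ := hw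
  rcases List.append_cons_eq_append_cons_cons hpos with
    ⟨q, rfl, rfl⟩ | ⟨rfl, rfl, rfl⟩ | ⟨rfl, rfl, rfl⟩ | ⟨q, rfl, rfl⟩
  · exact ⟨w₁, q ++ y :: x :: s, by simp, h₁, by simpa using traceEq.swap hxy (w₁ ++ q) s⟩
  · refine ⟨w₁ ++ [y], s, by simp, ?_, by simp [traceEq.refl]⟩
    simpa [or_imp, forall_and, hxy] using h₁
  · exact ⟨p, x :: w₂, by simp, fun b hb => h₁ b (by simp [hb]), by simp [traceEq.refl]⟩
  · refine ⟨p ++ y :: x :: q, w₂, by simp, fun b hb => h₁ b ?_, ?_⟩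
    · simp only [List.mem_append, List.mem_cons] at hb ⊢; tauto
    · simpa using traceEq.swap hxy p (q ++ w₂)

theorem traceEq.exists_visible (hsym : ∀ a b, I a b → I b a) {w₁ w₂ w : List S} {c : S}
    (h : traceEq I (w₁ ++ c :: w₂) w) (h₁ : ∀ b ∈ w₁, I c b) :
    ∃ w₁' w₂', w = w₁' ++ c :: w₂' ∧ (∀ b ∈ w₁', I c b) ∧ traceEq I (w₁ ++ w₂) (w₁' ++ w₂') := by
  have h' := h.reflTransGen hsym
  clear h
  induction h' with
  | refl => exact ⟨w₁, w₂, rfl, h₁, .refl _⟩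
  | tail _ hs ih =>
      obtain ⟨v₁, v₂, rfl, hv₁, hv⟩ := ih
      obtain ⟨v₁', v₂', rfl, hv₁', hv'⟩ := hs.exists_visible hv₁
      exact ⟨v₁', v₂', rfl, hv₁', hv.trans hv'⟩

theorem traceEq.exists_visible_of_cons (hsym : ∀ a b, I a b → I b a) {k w : List S} {c : S}
    (h : traceEq I (c :: k) w) :
    ∃ w₁ w₂, w = w₁ ++ c :: w₂ ∧ (∀ b ∈ w₁, I c b) ∧ traceEq I k (w₁ ++ w₂) :=
  traceEq.exists_visible hsym (w₁ := []) h (by simp)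

theorem traceEq.cons_cancel (hirr : ∀ a, ¬ I a a) (hsym : ∀ a b, I a b → I b a)
    {x y : List S} {c : S} (h : traceEq I (c :: x) (c :: y)) : traceEq I x y := by
  obtain ⟨_ | ⟨d, w₁⟩, w₂, hw, hw₁, hx⟩ := h.exists_visible_of_cons hsym
  · simpa [← List.cons.inj hw |>.2] using hx
  · obtain ⟨rfl, -⟩ := List.cons.inj hw
    exact absurd (hw₁ _ List.mem_cons_self) (hirr _)

theorem traceEq.cons_cons (hsym : ∀ a b, I a b → I b a) {x y : List S} {c d : S} (hcd : c ≠ d)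
    (h : traceEq I (c :: x) (d :: y)) :
    I c d ∧ ∃ r, traceEq I x (d :: r) ∧ traceEq I y (c :: r) := by
  obtain ⟨_ | ⟨e, w₁⟩, w₂, hw, hw₁, hx⟩ := h.exists_visible_of_cons hsym
  · exact absurd (List.cons.inj hw).1.symm hcd
  · obtain ⟨rfl, rfl⟩ := List.cons.inj hw
    refine ⟨hw₁ _ List.mem_cons_self, w₁ ++ w₂, hx, ?_⟩
    exact (traceEq_cons_append_of_forall (fun b hb => hw₁ b (by simp [hb])) w₂).symm

theorem traceEq.cons_append (hsym : ∀ a b, I a b → I b a) {k e f : List S} {c : S}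
    (h : traceEq I (c :: k) (e ++ f)) :
    (∃ e', traceEq I e (c :: e') ∧ traceEq I k (e' ++ f)) ∨
      (∃ f', traceEq I f (c :: f') ∧ (∀ b ∈ e, I c b) ∧ traceEq I k (e ++ f')) := by
  obtain ⟨w₁, w₂, hw, hw₁, hk⟩ := h.exists_visible_of_cons hsym
  rcases List.append_eq_append_iff.mp hw with ⟨q, rfl, rfl⟩ | ⟨q, rfl, hq⟩
  · refine Or.inr ⟨q ++ w₂, ?_, fun b hb => hw₁ b (by simp [hb]), by simpa using hk⟩
    exact (traceEq_cons_append_of_forall (fun b hb => hw₁ b (by simp [hb])) w₂).symm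
  · rcases List.cons_eq_append_iff.mp hq with ⟨rfl, rfl⟩ | ⟨q, rfl, rfl⟩
    · exact Or.inr ⟨w₂, .refl _, by simpa using hw₁, by simpa using hk⟩
    · refine Or.inl ⟨w₁ ++ q, ?_, by simpa using hk⟩
      exact (traceEq_cons_append_of_forall hw₁ q).symm

end Visible

open Classical in
/-- The normal form of `c · m` for a reduced `m`; the word chosen is determined only up to trace
equivalence. -/
noncomputable def consNF {S : Type*} (I : S → S → Prop) (c : S) (m : List S) : List S :=
  if h : ∃ m', traceEq I m (c :: m') then h.choose else c :: m

def Reduced {S : Type*} (I : S → S → Prop) (m : List S) : Prop :=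
  ∀ p s c, ¬ traceEq I m (p ++ c :: c :: s)

section ConsNF

variable {S : Type*} {I : S → S → Prop} (hirr : ∀ a, ¬ I a a) (hsym : ∀ a b, I a b → I b a)
  {c d : S} {m m' k : List S}

include hirr hsym in
theorem consNF_of_traceEq_cons (h : traceEq I m (c :: k)) : traceEq I (consNF I c m) k := by
  have hex : ∃ m', traceEq I m (c :: m') := ⟨k, h⟩
  rw [consNF, dif_pos hex]
  exact (hex.choose_spec.symm.trans h).cons_cancel hirr hsym

theorem consNF_of_not_exists (h : ¬ ∃ m', traceEq I m (c :: m')) : consNF I c m = c :: m := by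
  rw [consNF, dif_neg h]

theorem consNF_subperm : (consNF I c m).Subperm (c :: m) := by
  by_cases h : ∃ m', traceEq I m (c :: m')
  · rw [consNF, dif_pos h]
    exact (List.sublist_cons_self c _).subperm.trans
      (h.choose_spec.perm.symm.subperm.trans (List.sublist_cons_self c m).subperm)
  · rw [consNF_of_not_exists h]

include hirr hsym in
theorem consNF_congr (h : traceEq I m m') : traceEq I (consNF I c m) (consNF I c m') := by
  by_cases hf : ∃ k, traceEq I m (c :: k)
  · obtain ⟨k, hk⟩ := hf
    exact (consNF_of_traceEq_cons hirr hsym hk).trans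
      (consNF_of_traceEq_cons hirr hsym (h.symm.trans hk)).symm
  · have hf' : ¬ ∃ k, traceEq I m' (c :: k) := fun ⟨k, hk⟩ => hf ⟨k, h.trans hk⟩
    rw [consNF_of_not_exists hf, consNF_of_not_exists hf']
    exact h.cons c

include hirr hsym in
theorem consNF_consNF_comm_of_not_exists (hcd : I c d) (hd : traceEq I m (d :: k))
    (hc : ¬ ∃ k', traceEq I m (c :: k')) :
    traceEq I (consNF I c (consNF I d m)) (consNF I d (consNF I c m)) := by
  have hck : ¬ ∃ k', traceEq I k (c :: k') := fun ⟨k', hk'⟩ =>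
    hc ⟨d :: k', (hd.trans (hk'.cons d)).trans (traceEq.swap (hsym c d hcd) [] k')⟩
  have h₁ := consNF_congr hirr hsym (c := c) (consNF_of_traceEq_cons hirr hsym hd)
  rw [consNF_of_not_exists hck] at h₁
  rw [consNF_of_not_exists hc]
  exact h₁.trans (consNF_of_traceEq_cons hirr hsym ((hd.cons c).trans (traceEq.swap hcd [] k))).symm

include hirr hsym in
theorem consNF_consNF_comm (hcd : I c d) (m : List S) :
    traceEq I (consNF I c (consNF I d m)) (consNF I d (consNF I c m)) := by
  have hne : c ≠ d := by rintro rfl; exact hirr c hcd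
  by_cases hc : ∃ k, traceEq I m (c :: k) <;> by_cases hd : ∃ k, traceEq I m (d :: k)
  · obtain ⟨kc, hkc⟩ := hc
    obtain ⟨kd, hkd⟩ := hd
    obtain ⟨-, r, hr₁, hr₂⟩ := (hkc.symm.trans hkd).cons_cons hsym hne
    have h₁ := consNF_congr hirr hsym (c := c) ((consNF_of_traceEq_cons hirr hsym hkd).trans hr₂)
    have h₂ := consNF_congr hirr hsym (c := d) ((consNF_of_traceEq_cons hirr hsym hkc).trans hr₁)
    exact (h₁.trans (consNF_of_traceEq_cons hirr hsym (.refl _))).trans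
      (h₂.trans (consNF_of_traceEq_cons hirr hsym (.refl _))).symm
  · obtain ⟨kc, hkc⟩ := hc
    exact (consNF_consNF_comm_of_not_exists hirr hsym (hsym c d hcd) hkc hd).symm
  · obtain ⟨kd, hkd⟩ := hd
    exact consNF_consNF_comm_of_not_exists hirr hsym hcd hkd hc
  · have hcd' : ¬ ∃ k, traceEq I (d :: m) (c :: k) := fun ⟨k, hk⟩ =>
      hc ⟨_, ((hk.cons_cons hsym hne.symm).2.choose_spec.1)⟩
    have hdc' : ¬ ∃ k, traceEq I (c :: m) (d :: k) := fun ⟨k, hk⟩ =>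
      hd ⟨_, ((hk.cons_cons hsym hne).2.choose_spec.1)⟩
    rw [consNF_of_not_exists hc, consNF_of_not_exists hd, consNF_of_not_exists hcd',
      consNF_of_not_exists hdc']
    exact traceEq.swap hcd [] m

include hirr hsym in
theorem Reduced.consNF (hm : Reduced I m) : Reduced I (consNF I c m) := by
  intro p s d hred
  by_cases hf : ∃ k, traceEq I m (c :: k)
  · obtain ⟨k, hk⟩ := hf
    exact hm (c :: p) s d
      (hk.trans (((consNF_of_traceEq_cons hirr hsym hk).symm.trans hred).cons c))
  · rw [consNF_of_not_exists hf] at hred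
    obtain ⟨w₁, w₂, hw, hw₁, hmw⟩ := hred.exists_visible_of_cons hsym
    rcases List.append_cons_eq_append_cons_cons hw.symm with
      ⟨q, rfl, rfl⟩ | ⟨rfl, rfl, rfl⟩ | ⟨rfl, rfl, rfl⟩ | ⟨q, rfl, rfl⟩
    · exact hm (w₁ ++ q) s d (by simpa using hmw)
    · exact hf ⟨_, hmw.trans (traceEq_cons_append_of_forall hw₁ _).symm⟩
    · exact hirr _ (hw₁ _ (by simp))
    · exact hm p (q ++ w₂) d (by simpa using hmw)

include hirr hsym in
theorem consNF_consNF (hm : Reduced I m) : traceEq I (consNF I c (consNF I c m)) m := by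
  by_cases hf : ∃ k, traceEq I m (c :: k)
  · obtain ⟨k, hk⟩ := hf
    have hk' : ¬ ∃ k', traceEq I k (c :: k') := fun ⟨k', hk'⟩ =>
      hm [] k' c (hk.trans (hk'.cons c))
    have h := consNF_congr hirr hsym (c := c) (consNF_of_traceEq_cons hirr hsym hk)
    rw [consNF_of_not_exists hk'] at h
    exact h.trans hk.symm
  · rw [consNF_of_not_exists hf]
    exact consNF_of_traceEq_cons hirr hsym (.refl _)

end ConsNF

/-- The normal form of `w · m` for a reduced `m`. -/
noncomputable def mulNF {S : Type*} (I : S → S → Prop) (w m : List S) : List S :=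
  w.foldr (consNF I) m

/-- The Coxeter normal form `ŵ` of a word, up to trace equivalence. -/
noncomputable def nf {S : Type*} (I : S → S → Prop) (w : List S) : List S := mulNF I w []

section MulNF

variable {S : Type*} {I : S → S → Prop} (hirr : ∀ a, ¬ I a a) (hsym : ∀ a b, I a b → I b a)
  {c : S} {w w' m m' : List S}

@[simp] theorem mulNF_cons : mulNF I (c :: w) m = consNF I c (mulNF I w m) := rfl

theorem mulNF_append (x y : List S) : mulNF I (x ++ y) m = mulNF I x (mulNF I y m) :=
  List.foldr_append

theorem mulNF_subperm : (mulNF I w m).Subperm (w ++ m) := by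
  induction w with
  | nil => exact .refl _
  | cons c w ih => exact consNF_subperm.trans ((List.subperm_cons c).mpr ih)

include hirr hsym

theorem Reduced.mulNF (hm : Reduced I m) : Reduced I (mulNF I w m) := by
  induction w with
  | nil => exact hm
  | cons c w ih => exact ih.consNF hirr hsym

theorem mulNF_congr_right (h : traceEq I m m') : traceEq I (mulNF I w m) (mulNF I w m') := by
  induction w with
  | nil => exact h
  | cons c w ih => exact consNF_congr hirr hsym ih

theorem mulNF_congr_left (h : traceEq I w w') : traceEq I (mulNF I w m) (mulNF I w' m) := by
  induction h with
  | rel _ _ hs =>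
      obtain ⟨p, s, a, b, hab, rfl, rfl⟩ := hs
      simp only [mulNF_append, mulNF_cons]
      exact mulNF_congr_right hirr hsym (consNF_consNF_comm hirr hsym hab _)
  | refl => rfl
  | symm _ _ _ ih => exact ih.symm
  | trans _ _ _ _ _ ih₁ ih₂ => exact ih₁.trans ih₂

theorem mulNF_cancel (hm : Reduced I m) (e f : List S) :
    traceEq I (mulNF I (e ++ c :: c :: f) m) (mulNF I (e ++ f) m) := by
  rw [mulNF_append, mulNF_append]
  exact mulNF_congr_right hirr hsym (consNF_consNF hirr hsym (hm.mulNF hirr hsym))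

theorem mulNF_append_reverse (hm : Reduced I m) (x : List S) :
    traceEq I (mulNF I (x ++ x.reverse) m) m := by
  induction x generalizing m with
  | nil => rfl
  | cons c x ih =>
      have h := mulNF_congr_right hirr hsym (w := [c]) (ih (hm.consNF hirr hsym (c := c)))
      simp only [List.reverse_cons, ← List.append_assoc, mulNF_append] at h ⊢
      exact h.trans (consNF_consNF hirr hsym hm)

theorem mulNF_consNF (hm : Reduced I m) (k : List S) :
    traceEq I (mulNF I (consNF I c k) m) (consNF I c (mulNF I k m)) := by
  by_cases hf : ∃ k', traceEq I k (c :: k')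
  · obtain ⟨k', hk'⟩ := hf
    have hk'm := consNF_consNF hirr hsym (c := c) (hm.mulNF hirr hsym (w := k'))
    exact (mulNF_congr_left hirr hsym (consNF_of_traceEq_cons hirr hsym hk')).trans
      (hk'm.symm.trans (consNF_congr hirr hsym (mulNF_congr_left hirr hsym hk'.symm)))
  · rw [consNF_of_not_exists hf, mulNF_cons]

theorem mulNF_nf (hm : Reduced I m) (y : List S) :
    traceEq I (mulNF I (nf I y) m) (mulNF I y m) := by
  induction y with
  | nil => rfl
  | cons c y ih =>
      exact (mulNF_consNF hirr hsym hm _).trans (consNF_congr hirr hsym ih)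

end MulNF

section NF

variable {S : Type*} {I : S → S → Prop} (hirr : ∀ a, ¬ I a a) (hsym : ∀ a b, I a b → I b a)
  {b : S} {v w w' x y z : List S}

theorem reduced_nil : Reduced I ([] : List S) := fun p s c h => by
  simpa using h.perm.length_eq

theorem nf_subperm : (nf I w).Subperm w := by
  simpa [nf] using mulNF_subperm (I := I) (w := w) (m := [])

include hirr hsym

theorem reduced_nf (w : List S) : Reduced I (nf I w) := reduced_nil.mulNF hirr hsym

theorem nf_congr (h : traceEq I w w') : traceEq I (nf I w) (nf I w') :=
  mulNF_congr_left hirr hsym h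

theorem nf_append_nf_append (x y z : List S) :
    traceEq I (nf I (x ++ nf I y ++ z)) (nf I (x ++ y ++ z)) := by
  simp only [nf, mulNF_append]
  exact mulNF_congr_right hirr hsym (mulNF_nf hirr hsym (reduced_nf hirr hsym z) y)

theorem mem_of_mem_nf_append_append (h : b ∈ nf I (x ++ y ++ z)) :
    b ∈ x ∨ b ∈ nf I y ∨ b ∈ z := by
  have := nf_subperm.subset ((nf_append_nf_append hirr hsym x y z).mem_iff.mpr h)
  simpa only [List.mem_append, or_assoc] using this

theorem traceEq.mem_of_mem_nf_left (h : traceEq I v (x ++ y)) (hb : b ∈ nf I x) :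
    b ∈ nf I v ∨ b ∈ y := by
  have hx : traceEq I (nf I x) (nf I ([] ++ v ++ y.reverse)) := by
    have := mulNF_congr_right hirr hsym (w := x)
      (mulNF_append_reverse hirr hsym reduced_nil y)
    simp only [nf, ← mulNF_append] at this ⊢
    exact this.symm.trans (mulNF_congr_left hirr hsym (by simpa using h.symm.append_right _))
  simpa using mem_of_mem_nf_append_append hirr hsym (hx.mem_iff.mp hb)

theorem traceEq.mem_of_mem_nf_right (h : traceEq I v (x ++ y)) (hb : b ∈ nf I y) :
    b ∈ nf I v ∨ b ∈ x := by
  have hy : traceEq I (nf I y) (nf I (x.reverse ++ v ++ [])) := by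
    have := mulNF_append_reverse hirr hsym (reduced_nf hirr hsym y) x.reverse
    simp only [List.reverse_reverse, nf, ← mulNF_append] at this ⊢
    exact this.symm.trans (mulNF_congr_left hirr hsym (by simpa using h.symm.append_left _))
  simpa [or_comm] using mem_of_mem_nf_append_append hirr hsym (hy.mem_iff.mp hb)

end NF

def Trace.cons {S : Type*} {I : S → S → Prop} (c : S) : Trace I → Trace I :=
  Quotient.map (c :: ·) fun _ _ h => traceEq.cons c h

section Rewriting

variable {S : Type*} {I : S → S → Prop} (hirr : ∀ a, ¬ I a a) (hsym : ∀ a b, I a b → I b a)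
  {u n w : List S}

theorem RwC.cons {X Y : Trace I} (c : S) (h : RwC I X Y) : RwC I (X.cons c) (Y.cons c) := by
  obtain ⟨a, p, s, rfl, rfl⟩ := h
  exact ⟨a, c :: p, s, rfl, rfl⟩

theorem IrrC.eq_of_reflTransGen {X Y : Trace I} (hX : IrrC I X) (h : ReflTransGen (RwC I) X Y) :
    X = Y := by
  rcases h.cases_head with rfl | ⟨Z, hXZ, -⟩
  · rfl
  · exact absurd hXZ (hX Z)

theorem Reduced.irrC (h : Reduced I w) : IrrC I (mkT I w) := by
  rintro _ ⟨c, p, s, hw, -⟩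
  exact h p s c (mkT_eq_iff.mp hw)

include hirr hsym

theorem reflTransGen_rwC_nf (w : List S) : ReflTransGen (RwC I) (mkT I w) (mkT I (nf I w)) := by
  induction w with
  | nil => rfl
  | cons c w ih =>
      refine (ReflTransGen.lift (Trace.cons c) (fun _ _ h => h.cons c) _ _ ih).trans ?_
      change ReflTransGen (RwC I) (mkT I (c :: nf I w)) (mkT I (consNF I c (nf I w)))
      by_cases hf : ∃ k, traceEq I (nf I w) (c :: k)
      · obtain ⟨k, hk⟩ := hf
        refine .single ⟨c, [], k, mkT_eq_iff.mpr (hk.cons c), ?_⟩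
        exact mkT_eq_iff.mpr (consNF_of_traceEq_cons hirr hsym hk)
      · rw [consNF_of_not_exists hf]

theorem nf_traceEq_of_reflTransGen (h : ReflTransGen (RwC I) (mkT I u) (mkT I w)) :
    traceEq I (nf I u) (nf I w) := by
  suffices ∀ X, ReflTransGen (RwC I) X (mkT I w) → ∀ u, X = mkT I u → traceEq I (nf I u) (nf I w)
    from this _ h u rfl
  intro X hX
  induction hX using ReflTransGen.head_induction_on with
  | refl => exact fun u hu => nf_congr hirr hsym (mkT_eq_iff.mp hu.symm)
  | head hstep _ ih =>
      obtain ⟨c, e, f, hX, rfl⟩ := hstep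
      intro u hu
      refine (nf_congr hirr hsym (mkT_eq_iff.mp (hu.symm.trans hX))).trans ?_
      exact (mulNF_cancel hirr hsym reduced_nil e f).trans (ih _ rfl)

theorem traceEq_nf_of_irrC (hn : IrrC I (mkT I n)) (h : ReflTransGen (RwC I) (mkT I u) (mkT I n)) :
    traceEq I n (nf I u) := by
  have hnf : traceEq I n (nf I n) :=
    mkT_eq_iff.mp (hn.eq_of_reflTransGen (reflTransGen_rwC_nf hirr hsym n))
  exact hnf.trans (nf_traceEq_of_reflTransGen hirr hsym h).symm

theorem forall_irrC_iff {P : List S → Prop} (hP : ∀ x y, traceEq I x y → P x → P y) (u : List S) :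
    (∀ n, IrrC I (mkT I n) → ReflTransGen (RwC I) (mkT I u) (mkT I n) → P n) ↔ P (nf I u) := by
  refine ⟨fun h => h _ (reduced_nf hirr hsym u).irrC (reflTransGen_rwC_nf hirr hsym u), ?_⟩
  exact fun hu n hn h => hP _ _ (traceEq_nf_of_irrC hirr hsym hn h).symm hu

end Rewriting

section Levi

variable {S : Type*} {I : S → S → Prop} (hsym : ∀ a b, I a b → I b a)

include hsym

theorem traceEq.levi {g h e f : List S} (H : traceEq I (g ++ h) (e ++ f)) :
    ∃ e₁ e₂ f₁ f₂, traceEq I e (e₁ ++ e₂) ∧ traceEq I f (f₁ ++ f₂) ∧ traceEq I g (e₁ ++ f₁) ∧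
      traceEq I h (e₂ ++ f₂) ∧ ∀ x ∈ e₂, ∀ y ∈ f₁, I x y := by
  induction g generalizing e f with
  | nil => exact ⟨[], e, [], f, .refl _, .refl _, .refl _, H, by simp⟩
  | cons c g ih =>
      rcases H.cons_append hsym with ⟨e', he, hk⟩ | ⟨f', hf, hce, hk⟩
      · obtain ⟨e₁, e₂, f₁, f₂, he', hf, hg, hh, hind⟩ := ih hk
        exact ⟨c :: e₁, e₂, f₁, f₂, he.trans (he'.cons c), hf, hg.cons c, hh, hind⟩
      · obtain ⟨e₁, e₂, f₁, f₂, he, hf', hg, hh, hind⟩ := ih hk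
        have hmem : ∀ x, x ∈ e₁ ∨ x ∈ e₂ → x ∈ e := fun x hx => he.mem_iff.mpr (by simpa using hx)
        refine ⟨e₁, e₂, c :: f₁, f₂, he, hf.trans (hf'.cons c), ?_, hh, ?_⟩
        · exact (hg.cons c).trans
            (traceEq_cons_append_of_forall (fun x hx => hce x (hmem x (.inl hx))) f₁)
        · intro x hx y hy
          rcases List.mem_cons.mp hy with rfl | hy
          · exact hsym _ _ (hce x (hmem x (.inr hx)))
          · exact hind x hx y hy

theorem traceEq.levi_cons {g h e f : List S} {a : S} (H : traceEq I (g ++ a :: h) (e ++ f)) :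
    (∃ e₁ e₂ f₁ f₂, traceEq I e (e₁ ++ a :: e₂) ∧ traceEq I f (f₁ ++ f₂) ∧
      traceEq I g (e₁ ++ f₁) ∧ traceEq I h (e₂ ++ f₂) ∧ ∀ x ∈ a :: e₂, ∀ y ∈ f₁, I x y) ∨
    (∃ e₁ e₂ f₁ f₂, traceEq I e (e₁ ++ e₂) ∧ traceEq I f (f₁ ++ a :: f₂) ∧
      traceEq I g (e₁ ++ f₁) ∧ traceEq I h (e₂ ++ f₂) ∧ ∀ x ∈ e₂, ∀ y ∈ a :: f₁, I x y) := by
  obtain ⟨e₁, e₂, f₁, f₂, he, hf, hg, hh, hind⟩ := H.levi hsym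
  rcases hh.cons_append hsym with ⟨e₂', he₂, hh'⟩ | ⟨f₂', hf₂, hae₂, hh'⟩
  · refine .inl ⟨e₁, e₂', f₁, f₂, he.trans (he₂.append_left e₁), hf, hg, hh', ?_⟩
    exact fun x hx => hind x (he₂.mem_iff.mpr hx)
  · refine .inr ⟨e₁, e₂, f₁, f₂', he, hf.trans (hf₂.append_left f₁), hg, hh', ?_⟩
    intro x hx y hy
    rcases List.mem_cons.mp hy with rfl | hy
    · exact hsym _ _ (hae₂ x hx)
    · exact hind x hx y hy

end Levi

/-- A factor `a v a` of `u` with `α̂(v) ⊆ I(a)`. -/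
def HasCancellingFactor {S : Type*} (I : S → S → Prop) (a : S) (u : List S) : Prop :=
  ∃ p v s, traceEq I u (p ++ a :: (v ++ a :: s)) ∧ ∀ b ∈ nf I v, I a b

section CancellingFactor

variable {S : Type*} {I : S → S → Prop} (hirr : ∀ a, ¬ I a a) (hsym : ∀ a b, I a b → I b a)
  {a : S} {e f u u' n : List S}

theorem HasCancellingFactor.of_traceEq (h : traceEq I u u') (hu' : HasCancellingFactor I a u') :
    HasCancellingFactor I a u := by
  obtain ⟨p, v, s, hu', hv⟩ := hu'
  exact ⟨p, v, s, h.trans hu', hv⟩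

theorem HasCancellingFactor.append_right (h : HasCancellingFactor I a e) (t : List S) :
    HasCancellingFactor I a (e ++ t) := by
  obtain ⟨p, v, s, he, hv⟩ := h
  exact ⟨p, v, s ++ t, by simpa using he.append_right t, hv⟩

theorem HasCancellingFactor.append_left (t : List S) (h : HasCancellingFactor I a f) :
    HasCancellingFactor I a (t ++ f) := by
  obtain ⟨p, v, s, hf, hv⟩ := h
  exact ⟨t ++ p, v, s, by simpa using hf.append_left t, hv⟩

include hirr hsym

theorem HasCancellingFactor.of_append (h : HasCancellingFactor I a (e ++ f)) :
    HasCancellingFactor I a e ∨ HasCancellingFactor I a f ∨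
      ∃ e₁ e₂ f₁ f₂, traceEq I e (e₁ ++ a :: e₂) ∧ traceEq I f (f₁ ++ a :: f₂) ∧
        ∀ b ∈ nf I (e₂ ++ f₁), I a b := by
  obtain ⟨p, v, s, hu, hv⟩ := h
  -- Place the first `a`, then the second, in `e` or in `f`; the second cannot go to `e` if the
  -- first goes to `f`.
  rcases hu.symm.levi_cons hsym with
    ⟨e₁, e₂, f₁, f₂, he, hf, -, hvs, hind⟩ | ⟨e₁, e₂, f₁, f₂, -, hf, -, hvs, hind⟩
  · rcases hvs.levi_cons hsym with
      ⟨e₃, e₄, f₃, f₄, he₂, -, hv', -, hind'⟩ | ⟨e₃, e₄, f₃, f₄, he₂, hf₂, hv', -, hind'⟩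
    · refine .inl ⟨e₁, e₃, e₄, he.trans ((he₂.cons a).append_left e₁), fun b hb => ?_⟩
      rcases hv'.mem_of_mem_nf_left hirr hsym hb with hb | hb
      exacts [hv b hb, hind' a List.mem_cons_self b hb]
    · refine .inr (.inr ⟨e₁, e₂, f₁ ++ f₃, f₄, he, by simpa using hf.trans (hf₂.append_left f₁),
        fun b hb => ?_⟩)
      have hperm : traceEq I (e₂ ++ (f₁ ++ f₃)) (f₁ ++ v ++ e₄) := by
        have h₁ := (traceEq_append_comm fun x hx y hy =>
          hind x (List.mem_cons_of_mem a hx) y hy).append_right f₃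
        have h₂ := (he₂.append_right f₃).append_left f₁
        have h₃ := (traceEq_append_comm fun x hx y hy =>
          hind' x hx y (List.mem_cons_of_mem a hy)).append_left (f₁ ++ e₃)
        have h₄ := (hv'.symm.append_left f₁).append_right e₄
        simp only [List.append_assoc] at h₁ h₂ h₃ h₄ ⊢
        exact h₁.trans (h₂.trans (h₃.trans h₄))
      rcases mem_of_mem_nf_append_append hirr hsym ((nf_congr hirr hsym hperm).mem_iff.mp hb)
        with hb | hb | hb
      exacts [hind a List.mem_cons_self b hb, hv b hb, hsym _ _ (hind' b hb a List.mem_cons_self)]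
  · rcases hvs.levi_cons hsym with
      ⟨e₃, e₄, f₃, f₄, he₂, -, -, -, -⟩ | ⟨e₃, e₄, f₃, f₄, he₂, hf₂, hv', -, -⟩
    · exact absurd (hind a (he₂.mem_iff.mpr (by simp)) a List.mem_cons_self) (hirr a)
    · refine .inr (.inl ⟨f₁, f₃, f₄, hf.trans ((hf₂.cons a).append_left f₁), fun b hb => ?_⟩)
      rcases hv'.mem_of_mem_nf_right hirr hsym hb with hb | hb
      exacts [hv b hb, hsym _ _ (hind b (he₂.mem_iff.mpr (by simp [hb])) a List.mem_cons_self)]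

theorem HasCancellingFactor.append_cons_cons (h : HasCancellingFactor I a (e ++ f)) (c : S) :
    HasCancellingFactor I a (e ++ c :: c :: f) := by
  rcases h.of_append hirr hsym with he | hf | ⟨e₁, e₂, f₁, f₂, he, hf, hb⟩
  · simpa using he.append_right (c :: c :: f)
  · simpa using hf.append_left (e ++ [c, c])
  · refine ⟨e₁, e₂ ++ c :: c :: f₁, f₂, by simpa using he.append ((hf.cons c).cons c),
      fun b hb' => hb b ?_⟩
    exact (mulNF_cancel hirr hsym reduced_nil e₂ f₁).mem_iff.mp hb'

theorem HasCancellingFactor.count_nf_lt [DecidableEq S] (h : HasCancellingFactor I a u) :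
    (nf I u).count a < u.count a := by
  obtain ⟨p, v, s, hu, hv⟩ := h
  have hva : (nf I v).count a = 0 := List.count_eq_zero.mpr fun ha => hirr a (hv a ha)
  have hmove : traceEq I (p ++ [a] ++ nf I v ++ a :: s) (p ++ nf I v ++ a :: a :: s) := by
    simpa using (traceEq_cons_append_of_forall hv (a :: s)).append_left p
  have hnf : traceEq I (nf I u) (nf I (p ++ nf I v ++ s)) := by
    have hu' : traceEq I u (p ++ [a] ++ v ++ a :: s) := by simpa using hu
    refine (nf_congr hirr hsym hu').trans ?_
    refine (nf_append_nf_append hirr hsym (p ++ [a]) v (a :: s)).symm.trans ?_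
    exact (nf_congr hirr hsym hmove).trans (mulNF_cancel hirr hsym reduced_nil _ s)
  calc (nf I u).count a = (nf I (p ++ nf I v ++ s)).count a := hnf.perm.count_eq a
    _ ≤ (p ++ nf I v ++ s).count a := nf_subperm.count_le a
    _ < u.count a := by
      rw [hu.perm.count_eq]
      simp only [List.count_append, List.count_cons_self, hva]
      omega

theorem hasCancellingFactor_of_reflTransGen [DecidableEq S]
    (h : ReflTransGen (RwC I) (mkT I u) (mkT I n)) (hcount : n.count a ≠ u.count a) :
    HasCancellingFactor I a u := by
  suffices ∀ X, ReflTransGen (RwC I) X (mkT I n) → ∀ u, X = mkT I u → n.count a ≠ u.count a →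
      HasCancellingFactor I a u from this _ h u rfl hcount
  intro X hX
  induction hX using ReflTransGen.head_induction_on with
  | refl => exact fun u hu hne => absurd ((mkT_eq_iff.mp hu).perm.count_eq a) hne
  | head hstep _ ih =>
      obtain ⟨c, e, f, hX, rfl⟩ := hstep
      intro u hu hne
      have hu' : traceEq I u (e ++ c :: c :: f) := mkT_eq_iff.mp (hu.symm.trans hX)
      by_cases hca : c = a
      · subst hca
        exact ⟨e, [], f, by simpa using hu', by simp [nf, mulNF]⟩
      · have hcount : (e ++ f).count a = u.count a := by
          simp [hu'.perm.count_eq, List.count_append, hca]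
        exact .of_traceEq hu' ((ih (e ++ f) rfl (hcount ▸ hne)).append_cons_cons hirr hsym c)

theorem count_nf_eq_iff [DecidableEq S] :
    (nf I u).count a = u.count a ↔ ¬ HasCancellingFactor I a u :=
  ⟨fun h hu => (hu.count_nf_lt hirr hsym).ne h, fun h => by_contra fun hne =>
    h (hasCancellingFactor_of_reflTransGen hirr hsym (reflTransGen_rwC_nf hirr hsym u) hne)⟩

end CancellingFactor

/-- A trace `u` is `a`-short (the rule `a² → 1` is never applied when reducing `u`,
equivalently `a` occurs equally often in `u` and in its Coxeter normal form) if and only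
if `u` has no factor `a v a` with `α̂(v) ⊆ I(a)`, i.e. such that every letter occurring in
the Coxeter normal form of `v` is independent of `a`. -/
theorem aShort_iff_no_factor {S : Type*} [DecidableEq S]
    (I : S → S → Prop) (hirr : ∀ a, ¬ I a a) (hsym : ∀ a b, I a b → I b a)
    (u : List S) (a : S) :
    (∀ n : List S, IrrC I (mkT I n) → Relation.ReflTransGen (RwC I) (mkT I u) (mkT I n) →
      n.count a = u.count a) ↔
    ¬ ∃ p v s : List S, mkT I u = mkT I (p ++ a :: (v ++ a :: s)) ∧
        ∀ n : List S, IrrC I (mkT I n) → Relation.ReflTransGen (RwC I) (mkT I v) (mkT I n) →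
          ∀ b ∈ n, I a b := by
  have hv (v : List S) := forall_irrC_iff hirr hsym (P := fun n => ∀ b ∈ n, I a b)
    (fun _ _ h hx b hb => hx b (h.mem_iff.mpr hb)) v
  rw [forall_irrC_iff hirr hsym (P := fun n => n.count a = u.count a)
    (fun _ _ h hx => (h.perm.count_eq a).symm.trans hx)]
  simp only [hv, mkT_eq_iff]
  exact count_nf_eq_iff hirr hsym
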